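/- Let d ≥ 2 and g ≥ 2 be integers, and let C be the complete admissible uniform clutter on the vertex set X = X^1 ∪ ⋯ ∪ X^d, where X^ℓ = {x_1^ℓ,…,x_g^ℓ}, with edges {x_{i_1}^1, x_{i_2}^2, …, x_{i_d}^d} for all 1 ≤ i_1 ≤ i_2 ≤ ⋯ ≤ i_d ≤ g. Then the edge ideal I(C) ⊆ K[X] is normally torsion free (I(C)^i = I(C)^(i) for all i ≥ 1) and normal (I(C)^i equals its integral closure for all i ≥ 1). -/

import Mathlib

/-!
A monomial `x^m` lies in `I(C)^k` iff `m` dominates a sum of `k` edge vectors, i.e. iff `k`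
monotone lattice paths through the levels `1, …, d` fit under the vertex capacities `m`. By a
max-flow/min-cut argument this happens iff every staircase `{x_i^ℓ : t_ℓ ≤ i < t_{ℓ+1}}`
(`0 = t_1 ≤ ⋯ ≤ t_{d+1} = g`) carries `m`-weight at least `k`. Staircases are minimal vertex
covers, so the criterion only involves the symbolic power, which gives `I(C)^k = I(C)^(k)`; and it
is invariant under `(m, k) ↦ (p m, p k)`, which gives normality.
-/

open BigOperators MvPolynomial

/-- The edges of the complete admissible uniform clutter on the vertex set
`X = X¹ ∪ ⋯ ∪ X^d`, `X^ℓ = {x₁^ℓ,…,x_g^ℓ}` (the vertex `x_k^ℓ` is encoded as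
the pair `(ℓ, k) : Fin d × Fin g`): they are the sets
`{x_{i₁}^1, …, x_{i_d}^d}` with `i₁ ≤ i₂ ≤ ⋯ ≤ i_d`. -/
def CAUEdge (d g : ℕ) (s : Finset (Fin d × Fin g)) : Prop :=
  ∃ ι : Fin d → Fin g, Monotone ι ∧
    s = Finset.univ.image fun ℓ => (ℓ, ι ℓ)

def CAUMinVertexCover (d g : ℕ) (C : Finset (Fin d × Fin g)) : Prop :=
  (∀ s : Finset (Fin d × Fin g), CAUEdge d g s → ∃ v ∈ C, v ∈ s) ∧
    ∀ C' : Finset (Fin d × Fin g), C' ⊆ C →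
      (∀ s : Finset (Fin d × Fin g), CAUEdge d g s → ∃ v ∈ C', v ∈ s) →
      C' = C

noncomputable def mono (K : Type*) [Field K] {d g : ℕ}
    (a : Fin d × Fin g → ℕ) : MvPolynomial (Fin d × Fin g) K :=
  MvPolynomial.monomial (Finsupp.equivFunOnFinite.symm a) (1 : K)

open Finset
open scoped Pointwise

namespace MvPolynomial

variable {σ R : Type*} [CommSemiring R]

theorem span_monomial_image_pow (A : Set (σ →₀ ℕ)) (k : ℕ) :
    Ideal.span ((monomial · (1 : R)) '' A) ^ k = Ideal.span ((monomial · (1 : R)) '' (k • A)) := by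
  induction k with
  | zero => simp [Ideal.one_eq_top]
  | succ k ih =>
    rw [pow_succ, ih, Ideal.span_mul_span', succ_nsmul]
    congr 1
    ext x
    simp only [Set.mem_mul, Set.mem_add, Set.mem_image]
    constructor
    · rintro ⟨_, ⟨s, hs, rfl⟩, _, ⟨a, ha, rfl⟩, rfl⟩
      exact ⟨s + a, ⟨s, hs, a, ha, rfl⟩, by rw [monomial_mul, one_mul]⟩
    · rintro ⟨_, ⟨s, hs, a, ha, rfl⟩, rfl⟩
      exact ⟨_, ⟨s, hs, rfl⟩, _, ⟨a, ha, rfl⟩, by rw [monomial_mul, one_mul]⟩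

theorem monomial_one_mem_span_monomial_image_iff [Nontrivial R] {A : Set (σ →₀ ℕ)}
    {m : σ →₀ ℕ} :
    monomial m (1 : R) ∈ Ideal.span ((monomial · (1 : R)) '' A) ↔ ∃ s ∈ A, s ≤ m := by
  classical
  rw [mem_ideal_span_monomial_image, support_monomial, if_neg one_ne_zero]
  simp

theorem mem_of_forall_monomial_one_mem {I : Ideal (MvPolynomial σ R)} {x : MvPolynomial σ R}
    (h : ∀ m ∈ x.support, monomial m 1 ∈ I) : x ∈ I := by
  rw [x.as_sum]
  refine I.sum_mem fun m hm => ?_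
  simpa [C_mul_monomial] using I.mul_mem_left (C (coeff m x)) (h m hm)

theorem le_sum_of_mem_span_X_image_pow {C : Finset σ} {k : ℕ} {x : MvPolynomial σ R}
    (hx : x ∈ Ideal.span (X '' (C : Set σ)) ^ k) {m : σ →₀ ℕ} (hm : m ∈ x.support) :
    k ≤ ∑ v ∈ C, m v := by
  classical
  rw [show X '' (C : Set σ) = (monomial · (1 : R)) '' ((Finsupp.single · 1) '' C) by
    rw [Set.image_image]; rfl, span_monomial_image_pow, Finsupp.nsmul_single_one_image,
    mem_ideal_span_monomial_image] at hx
  obtain ⟨s, ⟨rfl, hsC⟩, hsm⟩ := hx m hm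
  calc s.degree = ∑ v ∈ C, s v :=
        Finset.sum_subset (by simpa using hsC) fun v _ hv => by simpa using hv
    _ ≤ ∑ v ∈ C, m v := Finset.sum_le_sum fun v _ => hsm v

end MvPolynomial

theorem Nat.findGreatest_crossing {P Q : ℕ → ℕ} (hQ : Monotone Q) {N : ℕ} (h0 : P 0 ≤ Q 0)
    (hN : Q N < P (N + 1)) :
    P (Nat.findGreatest (fun i => P i ≤ Q i) N) ≤ Q (Nat.findGreatest (fun i => P i ≤ Q i) N) ∧
      Q (Nat.findGreatest (fun i => P i ≤ Q i) N) <
        P (Nat.findGreatest (fun i => P i ≤ Q i) N + 1) := by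
  set F := Nat.findGreatest (fun i => P i ≤ Q i) N
  refine ⟨Nat.findGreatest_spec (P := fun i => P i ≤ Q i) (Nat.zero_le N) h0, ?_⟩
  rcases (Nat.findGreatest_le N : F ≤ N).lt_or_eq with hlt | heq
  · have := Nat.findGreatest_is_greatest (lt_add_one F) hlt
    exact (hQ (Nat.le_succ F)).trans_lt (not_le.1 this)
  · rwa [show F = N from heq]

namespace CAUClutter

structure IsStaircase (n g : ℕ) (t : ℕ → ℕ) : Prop where
  monotone : Monotone t
  map_zero : t 0 = 0
  map_top : t n = g

section MinCut

variable (a : ℕ → ℕ → ℕ)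

def stairSum (t : ℕ → ℕ) (n : ℕ) : ℕ :=
  ∑ ℓ ∈ range n, ∑ i ∈ Ico (t ℓ) (t (ℓ + 1)), a ℓ i

/-- `minCut a ℓ i` is the least `a`-weight of a staircase through the levels `0, …, ℓ` whose last
step ends at `i`. -/
def minCut : ℕ → ℕ → ℕ
  | 0, i => ∑ j ∈ range i, a 0 j
  | ℓ + 1, i => (range (i + 1)).inf' nonempty_range_add_one
      fun s => minCut ℓ s + ∑ j ∈ Ico s i, a (ℓ + 1) j

theorem minCut_succ_le (ℓ : ℕ) {i s : ℕ} (hs : s ≤ i) :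
    minCut a (ℓ + 1) i ≤ minCut a ℓ s + ∑ j ∈ Ico s i, a (ℓ + 1) j :=
  inf'_le _ (mem_range_succ_iff.2 hs)

theorem minCut_zero_right (ℓ : ℕ) : minCut a ℓ 0 = 0 := by
  induction ℓ with
  | zero => simp [minCut]
  | succ ℓ ih => simpa [ih] using minCut_succ_le a ℓ (le_refl 0)

theorem minCut_antitone_left (i : ℕ) : Antitone (minCut a · i) :=
  antitone_nat_of_succ_le fun ℓ => by simpa using minCut_succ_le a ℓ (le_refl i)

theorem minCut_succ_right_le (ℓ i : ℕ) : minCut a ℓ (i + 1) ≤ minCut a ℓ i + a ℓ i := by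
  cases ℓ with
  | zero => simp [minCut, sum_range_succ]
  | succ ℓ =>
    obtain ⟨s, hs, hmin⟩ := exists_mem_eq_inf' (nonempty_range_add_one (n := i))
      fun s => minCut a ℓ s + ∑ j ∈ Ico s i, a (ℓ + 1) j
    have hsi : s ≤ i := mem_range_succ_iff.1 hs
    calc minCut a (ℓ + 1) (i + 1) ≤ minCut a ℓ s + ∑ j ∈ Ico s (i + 1), a (ℓ + 1) j :=
          minCut_succ_le a ℓ (hsi.trans (Nat.le_succ i))
      _ = minCut a (ℓ + 1) i + a (ℓ + 1) i := by
          rw [sum_Ico_succ_top hsi, ← add_assoc, minCut, hmin]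

theorem exists_isStaircase_stairSum_eq_minCut (ℓ i : ℕ) :
    ∃ t, IsStaircase (ℓ + 1) i t ∧ stairSum a t (ℓ + 1) = minCut a ℓ i := by
  induction ℓ generalizing i with
  | zero =>
    refine ⟨fun m => if m = 0 then 0 else i, ⟨fun x y hxy => ?_, rfl, rfl⟩, ?_⟩
    · split_ifs <;> omega
    · simp [stairSum, minCut]
  | succ ℓ ih =>
    obtain ⟨s, hs, hmin⟩ := exists_mem_eq_inf' (nonempty_range_add_one (n := i))
      fun s => minCut a ℓ s + ∑ j ∈ Ico s i, a (ℓ + 1) j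
    have hsi : s ≤ i := mem_range_succ_iff.1 hs
    obtain ⟨t, ht, hsum⟩ := ih s
    refine ⟨fun m => if m ≤ ℓ + 1 then t m else i, ⟨fun x y hxy => ?_, ?_, ?_⟩, ?_⟩
    · split_ifs with hx hy hy
      · exact ht.monotone hxy
      · exact (ht.monotone hx).trans (ht.map_top.trans_le hsi)
      · omega
      · exact le_rfl
    · simp [ht.map_zero]
    · simp
    · have hagree : stairSum a (fun m => if m ≤ ℓ + 1 then t m else i) (ℓ + 1) =
          stairSum a t (ℓ + 1) :=
        sum_congr rfl fun m hm => by
          rw [mem_range] at hm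
          simp only [if_pos hm.le, if_pos (Nat.succ_le_of_lt hm)]
      rw [stairSum, sum_range_succ, ← stairSum, hagree, hsum, minCut, hmin]
      simp [ht.map_top]

/- Path `j` passes level `ℓ` at the row `i` with `minCut a ℓ i ≤ j < minCut a ℓ (i + 1)`. It is
monotone because `minCut` decreases in `ℓ`, and row `i` of level `ℓ` carries at most
`minCut a ℓ (i + 1) - minCut a ℓ i ≤ a ℓ i` paths. -/
theorem exists_paths_of_le_minCut {n g k : ℕ} (hk : k ≤ minCut a n g) :
    ∃ ι : ℕ → ℕ → ℕ, (∀ j, Monotone (ι j)) ∧ (∀ j < k, ∀ ℓ, ι j ℓ < g) ∧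
      ∀ ℓ ≤ n, ∀ i, #{j ∈ range k | ι j ℓ = i} ≤ a ℓ i := by
  have hg : k ≠ 0 → g ≠ 0 := by
    rintro hk0 rfl
    rw [minCut_zero_right] at hk
    omega
  have hcross : ∀ ℓ ≤ n, ∀ j < k,
      minCut a ℓ (Nat.findGreatest (fun i => minCut a ℓ i ≤ j) (g - 1)) ≤ j ∧
        j < minCut a ℓ (Nat.findGreatest (fun i => minCut a ℓ i ≤ j) (g - 1) + 1) := by
    intro ℓ hℓ j hj
    refine Nat.findGreatest_crossing (Q := fun _ => j) monotone_const
      (by simp [minCut_zero_right]) ?_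
    rw [Nat.sub_add_cancel (Nat.one_le_iff_ne_zero.2 (hg (by omega)))]
    exact hj.trans_le (hk.trans (minCut_antitone_left a g hℓ))
  refine ⟨fun j ℓ => Nat.findGreatest (fun i => minCut a ℓ i ≤ j) (g - 1),
    fun j ℓ ℓ' hℓ => Nat.findGreatest_mono_left
      (fun i hi => (minCut_antitone_left a i hℓ).trans hi) _,
    fun j hj ℓ => ?_, fun ℓ hℓ i => ?_⟩
  · show Nat.findGreatest _ _ < g
    have := hg (by omega)
    have := Nat.findGreatest_le (P := fun i => minCut a ℓ i ≤ j) (g - 1)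
    omega
  · calc #{j ∈ range k | Nat.findGreatest (fun i => minCut a ℓ i ≤ j) (g - 1) = i}
        ≤ #(Ico (minCut a ℓ i) (minCut a ℓ (i + 1))) := by
          refine card_le_card fun j hj => ?_
          rw [mem_filter, mem_range] at hj
          rw [mem_Ico, ← hj.2]
          exact hcross ℓ hℓ j hj.1
      _ ≤ a ℓ i := by
          rw [Nat.card_Ico]
          have := minCut_succ_right_le a ℓ i
          omega

end MinCut

variable {d g : ℕ}

def stairCover (d g : ℕ) (t : ℕ → ℕ) : Finset (Fin d × Fin g) :=
  {v | t v.1 ≤ v.2 ∧ (v.2 : ℕ) < t (v.1 + 1)}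

theorem exists_mem_stairCover (hd : d ≠ 0) {t : ℕ → ℕ} (ht : IsStaircase d g t)
    {ι : Fin d → Fin g} (hι : Monotone ι) : ∃ ℓ, (ℓ, ι ℓ) ∈ stairCover d g t := by
  obtain ⟨n, rfl⟩ := Nat.exists_eq_succ_of_ne_zero hd
  have hQ : Monotone fun ℓ => (ι (Fin.clamp ℓ n) : ℕ) :=
    fun x y hxy => hι (show min x n ≤ min y n from min_le_min_right n hxy)
  obtain ⟨hlow, hhigh⟩ := Nat.findGreatest_crossing (P := t) (N := n) hQ (by simp [ht.map_zero])
    ((ι _).isLt.trans_eq ht.map_top.symm)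
  set F := Nat.findGreatest (fun i => t i ≤ ι (Fin.clamp i n)) n
  have hF : (Fin.clamp F n : ℕ) = F := min_eq_left (Nat.findGreatest_le n)
  refine ⟨Fin.clamp F n, ?_⟩
  simp only [stairCover, mem_filter, mem_univ, true_and, hF]
  exact ⟨hlow, hhigh⟩

theorem eq_of_mem_stairCover {t : ℕ → ℕ} (ht : Monotone t) {ℓ ℓ' : Fin d} {i : Fin g}
    (h : (ℓ, i) ∈ stairCover d g t) (h' : (ℓ', i) ∈ stairCover d g t) : ℓ = ℓ' := by
  simp only [stairCover, mem_filter, mem_univ, true_and] at h h'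
  by_contra hne
  rcases Fin.lt_or_lt_of_ne hne with hlt | hlt
  · have := ht (show (ℓ : ℕ) + 1 ≤ ℓ' from hlt); omega
  · have := ht (show (ℓ' : ℕ) + 1 ≤ ℓ from hlt); omega

theorem stairCover_isMinVertexCover (hd : d ≠ 0) {t : ℕ → ℕ} (ht : IsStaircase d g t) :
    CAUMinVertexCover d g (stairCover d g t) := by
  refine ⟨?_, fun C' hC' hcover => Subset.antisymm hC' fun v hv => ?_⟩
  · rintro _ ⟨ι, hι, rfl⟩
    obtain ⟨ℓ, hℓ⟩ := exists_mem_stairCover hd ht hι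
    exact ⟨_, hℓ, mem_image_of_mem _ (mem_univ ℓ)⟩
  · obtain ⟨w, hw, hwrow⟩ := hcover _ ⟨fun _ => v.2, monotone_const, rfl⟩
    obtain ⟨ℓ, -, rfl⟩ := mem_image.1 hwrow
    rwa [eq_of_mem_stairCover ht.monotone (hC' hw) hv] at hw

def capacity (m : Fin d × Fin g →₀ ℕ) (ℓ i : ℕ) : ℕ :=
  if h : ℓ < d ∧ i < g then m (⟨ℓ, h.1⟩, ⟨i, h.2⟩) else 0

theorem capacity_apply (m : Fin d × Fin g →₀ ℕ) (v : Fin d × Fin g) :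
    capacity m v.1 v.2 = m v := by
  simp [capacity]

theorem sum_stairCover_eq_stairSum (m : Fin d × Fin g →₀ ℕ) (t : ℕ → ℕ) :
    ∑ v ∈ stairCover d g t, m v = stairSum (capacity m) t d := by
  have hrow : ∀ ℓ : Fin d, ∑ i ∈ Ico (t ℓ) (t (ℓ + 1)), capacity m ℓ i =
      ∑ i : Fin g, if t ℓ ≤ i ∧ (i : ℕ) < t (ℓ + 1) then m (ℓ, i) else 0 := by
    intro ℓ
    simp only [← capacity_apply m (ℓ, _)]
    rw [Fin.sum_univ_eq_sum_range (fun i => if t ℓ ≤ i ∧ i < t (ℓ + 1) then capacity m ℓ i else 0),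
      ← sum_filter]
    refine (sum_subset (fun i hi => ?_) fun i hi hi' => ?_).symm
    · simp_all
    · have : g ≤ i := by simp_all
      simp [capacity, not_lt.2 this]
  rw [stairSum, ← Fin.sum_univ_eq_sum_range (fun ℓ => ∑ i ∈ Ico (t ℓ) (t (ℓ + 1)), capacity m ℓ i),
    stairCover, sum_filter, Fintype.sum_prod_type]
  simp only [hrow]

noncomputable def edgeExp (ι : Fin d → Fin g) : Fin d × Fin g →₀ ℕ :=
  ∑ ℓ, Finsupp.single (ℓ, ι ℓ) 1

theorem edgeExp_apply (ι : Fin d → Fin g) (v : Fin d × Fin g) :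
    edgeExp ι v = if ι v.1 = v.2 then 1 else 0 := by
  classical
  simp [edgeExp, Finsupp.finsetSum_apply, Finsupp.single_apply, Prod.ext_iff, ite_and]

def edgeExps (d g : ℕ) : Set (Fin d × Fin g →₀ ℕ) :=
  edgeExp '' {ι | Monotone ι}

theorem exists_mem_nsmul_edgeExps_le (hd : d ≠ 0) {k : ℕ} {m : Fin d × Fin g →₀ ℕ}
    (hcut : ∀ t, IsStaircase d g t → k ≤ ∑ v ∈ stairCover d g t, m v) :
    ∃ s ∈ k • edgeExps d g, s ≤ m := by
  obtain ⟨n, rfl⟩ := Nat.exists_eq_succ_of_ne_zero hd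
  obtain ⟨t, ht, hsum⟩ := exists_isStaircase_stairSum_eq_minCut (capacity m) n g
  have hk : k ≤ minCut (capacity m) n g := by
    rw [← hsum, ← sum_stairCover_eq_stairSum]
    exact hcut t ht
  obtain ⟨ι, hmono, hlt, hcount⟩ := exists_paths_of_le_minCut (capacity m) hk
  let path : Fin k → Fin (n + 1) → Fin g := fun j ℓ => ⟨ι j ℓ, hlt j j.2 ℓ⟩
  refine ⟨∑ j, edgeExp (path j), Set.mem_nsmul.2
    ⟨fun j => ⟨edgeExp (path j), path j, fun ℓ ℓ' h => hmono j h, rfl⟩, List.sum_ofFn⟩,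
    fun v => ?_⟩
  calc (∑ j, edgeExp (path j)) v = #{j ∈ range k | ι j v.1 = v.2} := by
        simp [Finsupp.finsetSum_apply, edgeExp_apply, path, Fin.ext_iff,
          Fin.sum_univ_eq_sum_range (fun j => if ι j v.1 = v.2 then 1 else 0)]
    _ ≤ capacity m v.1 v.2 := hcount v.1 (Nat.lt_succ_iff.1 v.1.2) v.2
    _ = m v := capacity_apply m v

variable (R : Type*) [CommSemiring R]

noncomputable def edgeIdeal (d g : ℕ) : Ideal (MvPolynomial (Fin d × Fin g) R) :=
  Ideal.span {f | ∃ ι : Fin d → Fin g, Monotone ι ∧ f = ∏ ℓ : Fin d, X (ℓ, ι ℓ)}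

theorem edgeIdeal_eq_span_monomial :
    edgeIdeal R d g = Ideal.span ((monomial · (1 : R)) '' edgeExps d g) := by
  rw [edgeIdeal, edgeExps, Set.image_image]
  congr 1
  ext f
  simp [edgeExp, monomial_sum_one, eq_comm]
  rfl

theorem edgeIdeal_pow_eq_span_monomial (k : ℕ) :
    edgeIdeal R d g ^ k = Ideal.span ((monomial · (1 : R)) '' (k • edgeExps d g)) := by
  rw [edgeIdeal_eq_span_monomial, span_monomial_image_pow]

theorem edgeIdeal_le_span_X {C : Finset (Fin d × Fin g)}
    (hC : ∀ s, CAUEdge d g s → ∃ v ∈ C, v ∈ s) :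
    edgeIdeal R d g ≤ Ideal.span (X '' (C : Set (Fin d × Fin g))) := by
  refine Ideal.span_le.2 ?_
  rintro _ ⟨ι, hι, rfl⟩
  obtain ⟨v, hvC, hv⟩ := hC _ ⟨ι, hι, rfl⟩
  obtain ⟨ℓ, -, rfl⟩ := mem_image.1 hv
  exact Ideal.mem_of_dvd _ (dvd_prod_of_mem _ (mem_univ ℓ)) (Ideal.subset_span ⟨_, hvC, rfl⟩)

theorem monomial_mem_edgeIdeal_pow_iff [Nontrivial R] (hd : d ≠ 0) {k : ℕ}
    {m : Fin d × Fin g →₀ ℕ} :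
    monomial m (1 : R) ∈ edgeIdeal R d g ^ k ↔
      ∀ t, IsStaircase d g t → k ≤ ∑ v ∈ stairCover d g t, m v := by
  refine ⟨fun hm t ht => ?_, fun hcut => ?_⟩
  · refine le_sum_of_mem_span_X_image_pow
      (Ideal.pow_right_mono (edgeIdeal_le_span_X R (stairCover_isMinVertexCover hd ht).1) k hm) ?_
    classical
    simp [support_monomial]
  · rw [edgeIdeal_pow_eq_span_monomial, monomial_one_mem_span_monomial_image_iff]
    exact exists_mem_nsmul_edgeExps_le hd hcut

theorem edgeIdeal_pow_eq_iInf [Nontrivial R] (hd : d ≠ 0) (k : ℕ) :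
    edgeIdeal R d g ^ k = ⨅ (C : Finset (Fin d × Fin g)) (_ : CAUMinVertexCover d g C),
      Ideal.span (X '' (C : Set (Fin d × Fin g))) ^ k := by
  refine le_antisymm (le_iInf₂ fun C hC => Ideal.pow_right_mono (edgeIdeal_le_span_X R hC.1) k)
    fun x hx => mem_of_forall_monomial_one_mem fun m hm =>
      (monomial_mem_edgeIdeal_pow_iff R hd).2 fun t ht => le_sum_of_mem_span_X_image_pow ?_ hm
  exact Ideal.mem_iInf.1 (Ideal.mem_iInf.1 hx (stairCover d g t))
    (stairCover_isMinVertexCover hd ht)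

theorem edgeIdeal_pow_eq_span_mono (K : Type*) [Field K] (hd : d ≠ 0) (k : ℕ) :
    edgeIdeal K d g ^ k = Ideal.span {f | ∃ a : Fin d × Fin g → ℕ, f = mono K a ∧
      ∃ p : ℕ, 0 < p ∧ mono K a ^ p ∈ edgeIdeal K d g ^ (p * k)} := by
  refine le_antisymm ?_ (Ideal.span_le.2 ?_)
  · rw [edgeIdeal_pow_eq_span_monomial]
    refine Ideal.span_mono ?_
    rintro _ ⟨s, hs, rfl⟩
    refine ⟨s, by simp [mono], 1, one_pos, ?_⟩
    rw [one_mul, pow_one, mono, Finsupp.equivFunOnFinite_symm_coe, edgeIdeal_pow_eq_span_monomial]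
    exact Ideal.subset_span ⟨s, hs, rfl⟩
  · rintro _ ⟨a, rfl, p, hp, hpow⟩
    rw [mono, monomial_pow, one_pow, monomial_mem_edgeIdeal_pow_iff K hd] at hpow
    refine (monomial_mem_edgeIdeal_pow_iff K hd).2 fun t ht => le_of_mul_le_mul_left ?_ hp
    simpa [mul_sum] using hpow t ht

end CAUClutter

open CAUClutter in
theorem edge_ideal_complete_admissible_uniform_clutter_ntf_and_normal_general
    (K : Type*) [Field K] (d g : ℕ) (hd : 2 ≤ d)
    (I : Ideal (MvPolynomial (Fin d × Fin g) K))
    (hI : I = Ideal.span {f | ∃ ι : Fin d → Fin g, Monotone ι ∧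
      f = ∏ ℓ : Fin d, (X (ℓ, ι ℓ) : MvPolynomial (Fin d × Fin g) K)}) :
    (∀ k : ℕ, 1 ≤ k →
      I ^ k = ⨅ (C : Finset (Fin d × Fin g)) (_ : CAUMinVertexCover d g C),
        (Ideal.span
          ((fun v => (X v : MvPolynomial (Fin d × Fin g) K)) '' ↑C)) ^ k) ∧
    (∀ k : ℕ, 1 ≤ k →
      I ^ k = Ideal.span {f | ∃ a : Fin d × Fin g → ℕ, f = mono K a ∧
        ∃ p : ℕ, 0 < p ∧ mono K a ^ p ∈ I ^ (p * k)}) := by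
  subst hI
  have hd0 : d ≠ 0 := by omega
  exact ⟨fun k _ => edgeIdeal_pow_eq_iInf K hd0 k, fun k _ => edgeIdeal_pow_eq_span_mono K hd0 k⟩

/-- for integers `d ≥ 2`, `g ≥ 2`, the edge ideal `I(C)` of the
complete admissible uniform clutter `C` is normally torsion free (`I(C)^k`
equals the `k`-th symbolic power, the intersection of the `k`-th powers of
the ideals generated by the minimal vertex covers, for all `k ≥ 1`) and
normal (`I(C)^k` equals its integral closure for all `k ≥ 1`). -/
theorem edge_ideal_complete_admissible_uniform_clutter_ntf_and_normal
    (K : Type*) [Field K] (d g : ℕ) (hd : 2 ≤ d) (hg : 2 ≤ g)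
    (I : Ideal (MvPolynomial (Fin d × Fin g) K))
    (hI : I = Ideal.span {f | ∃ ι : Fin d → Fin g, Monotone ι ∧
      f = ∏ ℓ : Fin d, (X (ℓ, ι ℓ) : MvPolynomial (Fin d × Fin g) K)}) :
    (∀ k : ℕ, 1 ≤ k →
      I ^ k = ⨅ (C : Finset (Fin d × Fin g)) (_ : CAUMinVertexCover d g C),
        (Ideal.span
          ((fun v => (X v : MvPolynomial (Fin d × Fin g) K)) '' ↑C)) ^ k) ∧
    (∀ k : ℕ, 1 ≤ k →
      I ^ k = Ideal.span {f | ∃ a : Fin d × Fin g → ℕ, f = mono K a ∧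
        ∃ p : ℕ, 0 < p ∧ mono K a ^ p ∈ I ^ (p * k)}) :=
  edge_ideal_complete_admissible_uniform_clutter_ntf_and_normal_general K d g hd I hI
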